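/- arXiv:2007.10726 — 4 statements merged into one kernel-verified Lean document; each statement's English description precedes it below -/
import Mathlib

section
/- Let {P₁,…,Pₙ} be a Cartesian decomposition of Ω, and for J ⊆ {1,…,n} let P_J be the partition whose underlying equivalence identifies ω₁, ω₂ iff they lie in the same part of Pᵢ for all i ∈ J. Then for all J, K ⊆ {1,…,n}: P_{J∪K} = P_J ∧ P_K and P_{J∩K} = P_J ∨ P_K; in particular J ↦ P_J is an order-reversing lattice anti-isomorphism from the Boolean lattice of subsets of {1,…,n} onto its image in the partition lattice. -/
/-- For a family `P` of partitions of `Ω` and `J ⊆ {1,…,n}`, the partition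
`P_J` identifying two points iff they lie in the same part of `Pᵢ` for all
`i ∈ J`. -/
def partJ {Ω : Type*} {n : ℕ} (P : Fin n → Setoid Ω) (J : Set (Fin n)) : Setoid Ω :=
  ⟨fun x y => ∀ i ∈ J, (P i).r x y,
   ⟨fun x i _ => (P i).iseqv.refl x,
    fun h i hi => (P i).iseqv.symm (h i hi),
    fun h₁ h₂ i hi => (P i).iseqv.trans (h₁ i hi) (h₂ i hi)⟩⟩

/-!
`J ↦ P_J` is antitone and turns unions into meets for any family of partitions. The other
two facts use that every transversal meets in a point: a point `z` lying in the `Pᵢ`-part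
of `x` for `i ∈ J` and in that of `y` for `i ∉ J` links `x` to `y` through `P_J` and then
`P_K` whenever `x ≡ y` modulo `P_{J ∩ K}`; and if `i ∉ J`, then mixing two points in
different `Pᵢ`-parts the same way shows `P_J ≰ P_K` for every `K ∋ i`.
-/

namespace partJ

variable {Ω : Type*} {n : ℕ} {P : Fin n → Setoid Ω}

theorem rel_iff {J : Set (Fin n)} {x y : Ω} : (partJ P J).r x y ↔ ∀ i ∈ J, (P i).r x y :=
  Iff.rfl

theorem antitone : Antitone (partJ P) :=
  fun _ _ hJK _ _ h i hi => h i (hJK hi)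

theorem union (J K : Set (Fin n)) : partJ P (J ∪ K) = partJ P J ⊓ partJ P K := by
  ext x y
  simp only [Setoid.inf_iff_and, rel_iff, Set.mem_union, or_imp, forall_and]

section Transversal

variable (hex : ∀ f : Fin n → Ω, ∃ x, ∀ i, (P i).r x (f i))
include hex

theorem exists_rel_and_rel_compl (J : Set (Fin n)) (x y : Ω) :
    ∃ z, (partJ P J).r z x ∧ (partJ P Jᶜ).r z y := by
  classical
  obtain ⟨z, hz⟩ := hex fun i => if i ∈ J then x else y
  exact ⟨z, fun i hi => by simpa [hi] using hz i, fun i hi => by simpa [show i ∉ J from hi] using hz i⟩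

theorem inter (J K : Set (Fin n)) : partJ P (J ∩ K) = partJ P J ⊔ partJ P K := by
  refine le_antisymm (fun x y hxy => ?_) (sup_le (antitone Set.inter_subset_left)
    (antitone Set.inter_subset_right))
  obtain ⟨z, hzx, hzy⟩ := exists_rel_and_rel_compl hex J x y
  have hzy_K : (partJ P K).r z y := by
    intro i hiK
    by_cases hiJ : i ∈ J
    · exact (P i).trans (hzx i hiJ) (hxy i ⟨hiJ, hiK⟩)
    · exact hzy i hiJ
  exact (partJ P J ⊔ partJ P K).trans
    (le_sup_left (a := partJ P J) ((partJ P J).symm hzx)) (le_sup_right (b := partJ P K) hzy_K)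

theorem subset_of_le (h2 : ∀ i, ∃ a b : Ω, ¬ (P i).r a b) {J K : Set (Fin n)}
    (hle : partJ P J ≤ partJ P K) : K ⊆ J := by
  intro i hiK
  by_contra hiJ
  obtain ⟨a, b, hab⟩ := h2 i
  obtain ⟨z, hza, hzb⟩ := exists_rel_and_rel_compl hex {i} a b
  have hzb_J : (partJ P J).r z b := antitone (Set.subset_compl_singleton_iff.mpr hiJ) hzb
  exact hab ((P i).trans ((P i).symm (hza i rfl)) (hle hzb_J i hiK))

theorem injective (h2 : ∀ i, ∃ a b : Ω, ¬ (P i).r a b) : Function.Injective (partJ P) :=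
  fun _ _ hJK => le_antisymm (subset_of_le hex h2 hJK.ge) (subset_of_le hex h2 hJK.le)

end Transversal

end partJ

/-- For a Cartesian decomposition `{P₁,…,Pₙ}` of `Ω`, the map `J ↦ P_J`
satisfies `P_{J∪K} = P_J ∧ P_K` and `P_{J∩K} = P_J ∨ P_K`; in particular it
is an injective, order-reversing map from the Boolean lattice of subsets of
`{1,…,n}` into the partition lattice of `Ω`. -/
theorem cartesianLattice_antiIso {Ω : Type*} {n : ℕ} (P : Fin n → Setoid Ω)
    (h2 : ∀ i, ∃ a b : Ω, ¬ (P i).r a b)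
    (hcart : ∀ f : Fin n → Ω, ∃! x : Ω, ∀ i, (P i).r x (f i)) :
    (∀ J K : Set (Fin n), partJ P (J ∪ K) = partJ P J ⊓ partJ P K) ∧
    (∀ J K : Set (Fin n), partJ P (J ∩ K) = partJ P J ⊔ partJ P K) ∧
    Function.Injective (partJ P) ∧
    Antitone (partJ P) := by
  have hex : ∀ f : Fin n → Ω, ∃ x, ∀ i, (P i).r x (f i) := fun f => (hcart f).exists
  exact ⟨partJ.union, partJ.inter hex, partJ.injective hex h2, partJ.antitone⟩
end

section
/- Let T be a finite group and m an odd integer with m ≥ 2 (hence m ≥ 3). Define a colouring c : T^m → T by c([t₁,…,t_m]) = u₁u₂⋯u_m where uᵢ = tᵢ for odd i and uᵢ = tᵢ⁻¹ for even i. Then c is a proper colouring of the diagonal graph Γ_D(T,m): adjacent vertices receive different colours. Consequently the chromatic number of Γ_D(T,m) is at most |T|. -/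
/-- The diagonal graph `Γ_D(T,m)` on vertex set `T^m`: two distinct vertices
are adjacent iff they differ in exactly one coordinate, or one is obtained
from the other by multiplying all coordinates on the left by a fixed
non-identity element of `T`. -/
def diagGraph (T : Type*) [Group T] (m : ℕ) : SimpleGraph (Fin m → T) where
  Adj a b := a ≠ b ∧ ((∃! i, a i ≠ b i) ∨ ∃ x : T, x ≠ 1 ∧ ∀ i, b i = x * a i)
  symm := by
    constructor
    rintro a b ⟨hab, h⟩
    refine ⟨hab.symm, ?_⟩
    rcases h with ⟨i, hi, hu⟩ | ⟨x, hx, he⟩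
    · exact Or.inl ⟨i, hi.symm, fun j hj => hu j hj.symm⟩
    · exact Or.inr ⟨x⁻¹, inv_ne_one.mpr hx, fun i => by rw [he i, inv_mul_cancel_left]⟩
  loopless := ⟨fun a h => h.1 rfl⟩

/-- The colouring `c([t₁,…,t_m]) = u₁u₂⋯u_m` where `uᵢ = tᵢ` for odd `i` and
`uᵢ = tᵢ⁻¹` for even `i` (positions counted from 1, so 0-based index `i` uses
`t i` when `i` is even). -/
def oddColouring {T : Type*} [Group T] (m : ℕ) (t : Fin m → T) : T :=
  (List.ofFn fun i : Fin m => if (i : ℕ) % 2 = 0 then t i else (t i)⁻¹).prod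

/-! Each coordinate occurs exactly once in the alternating product `c(t)`, so changing a
single coordinate changes `c(t)`. Multiplying every coordinate on the left by `x` turns
consecutive factors into `(x a) (x b)⁻¹ = x (a b⁻¹) x⁻¹`; for odd `m` these inner `x`'s
cancel and `c(x t) = x c(t)`, which differs from `c(t)` as `x ≠ 1`. -/

open Function

theorem List.ofFn_update {α : Type*} {m : ℕ} (f : Fin m → α) (i : Fin m) (x : α) :
    List.ofFn (update f i x) = (List.ofFn f).set i x := by
  refine List.ext_getElem (by simp) fun n _ _ => ?_
  simp [List.getElem_set, update_apply, Fin.ext_iff, eq_comm]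

theorem List.prod_ofFn_update_injective {G : Type*} [CancelMonoid G] {m : ℕ} (g : Fin m → G)
    (i : Fin m) : Injective fun x => (List.ofFn (update g i x)).prod := by
  intro x y h
  simpa [List.ofFn_update, List.prod_set] using h

section
variable {T : Type*} [Group T]

theorem oddColouring_update_injective {m : ℕ} (t : Fin m → T) (i : Fin m) :
    Injective fun x => oddColouring m (update t i x) := by
  let sign (j : Fin m) (y : T) : T := if (j : ℕ) % 2 = 0 then y else y⁻¹
  have hsign : Injective (sign i) := by
    unfold sign
    split_ifs
    exacts [injective_id, inv_injective]
  intro x y h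
  have hupdate (z : T) :
      (fun j => sign j (update t i z j)) = update (fun j => sign j (t j)) i (sign i z) :=
    funext (apply_update sign t i z)
  refine hsign (List.prod_ofFn_update_injective (fun j => sign j (t j)) i ?_)
  beta_reduce
  rw [← hupdate, ← hupdate]
  exact h

theorem oddColouring_add_two {m : ℕ} (t : Fin (m + 2) → T) :
    oddColouring (m + 2) t = t 0 * (t 1)⁻¹ * oddColouring m (fun i => t i.succ.succ) := by
  simp [oddColouring, List.ofFn_succ, mul_assoc, Nat.add_assoc]

theorem oddColouring_mul_left {m : ℕ} (hodd : Odd m) (x : T) (t : Fin m → T) :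
    oddColouring m (fun i => x * t i) = x * oddColouring m t := by
  obtain ⟨k, rfl⟩ := hodd
  induction k with
  | zero => simp [oddColouring]
  | succ k ih =>
    change oddColouring (2 * k + 1 + 2) _ = x * oddColouring (2 * k + 1 + 2) t
    rw [oddColouring_add_two, oddColouring_add_two, ih]
    group

theorem oddColouring_ne_of_adj {m : ℕ} (hodd : Odd m) {a b : Fin m → T}
    (hab : (diagGraph T m).Adj a b) : oddColouring m a ≠ oddColouring m b := by
  obtain ⟨-, ⟨i, hai, hi⟩ | ⟨x, hx, hb⟩⟩ := hab
  · have hb : b = update a i (b i) := by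
      funext j
      by_cases hj : j = i
      · simp [hj]
      · simpa [hj] using not_imp_comm.mp (hi j) hj |>.symm
    have := (oddColouring_update_injective a i).ne hai
    rwa [update_eq_self, ← hb] at this
  · obtain rfl : b = fun i => x * a i := funext hb
    rw [oddColouring_mul_left hodd]
    exact fun h => hx (mul_eq_right.mp h.symm)
end

theorem diagGraph_proper_colouring_odd_general {T : Type*} [Group T] [Fintype T]
    {m : ℕ} (hodd : Odd m) :
    (∀ a b : Fin m → T, (diagGraph T m).Adj a b →
      oddColouring m a ≠ oddColouring m b) ∧
    (diagGraph T m).chromaticNumber ≤ (Fintype.card T : ℕ∞) := by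
  let colouring : (diagGraph T m).Coloring T :=
    SimpleGraph.Coloring.mk (oddColouring m) (oddColouring_ne_of_adj hodd)
  exact ⟨fun _ _ => oddColouring_ne_of_adj hodd, colouring.colorable.chromaticNumber_le⟩

/-- For odd `m ≥ 2` (hence `m ≥ 3`), the alternating-product colouring is a
proper colouring of the diagonal graph `Γ_D(T,m)`; consequently the chromatic
number of `Γ_D(T,m)` is at most `|T|`. -/
theorem diagGraph_proper_colouring_odd {T : Type*} [Group T] [Fintype T]
    {m : ℕ} (hodd : Odd m) (hm : 2 ≤ m) :
    (∀ a b : Fin m → T, (diagGraph T m).Adj a b →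
      oddColouring m a ≠ oddColouring m b) ∧
    (diagGraph T m).chromaticNumber ≤ (Fintype.card T : ℕ∞) :=
  diagGraph_proper_colouring_odd_general hodd
end

section
/- Let T be a finite group admitting a complete mapping φ with associated orthomorphism ψ(x) = xφ(x), and let m ≥ 2 be even. Define c : T^m → T by c([t₁,…,t_m]) = t₁⁻¹t₂t₃⁻¹t₄⋯t_{m-1}⁻¹ψ(t_m). Then c is a proper colouring of the diagonal graph Γ_D(T,m), so the chromatic number of Γ_D(T,m) equals |T|. -/
/-- The colouring `c([t₁,…,t_m]) = t₁⁻¹t₂t₃⁻¹t₄⋯t_{m-1}⁻¹ψ(t_m)` where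
`ψ(x) = xφ(x)` is the orthomorphism associated with a complete mapping `φ`
(0-based: even-index coordinates are inverted, and the last coordinate is
replaced by `ψ` of it). -/
def hpColouring {T : Type*} [Group T] (m : ℕ) (φ : T → T) (t : Fin m → T) : T :=
  (List.ofFn fun i : Fin m =>
    if (i : ℕ) = m - 1 then t i * φ (t i)
    else if (i : ℕ) % 2 = 0 then (t i)⁻¹ else t i).prod

/-!
For even `m`, `c(t) = (t₁⁻¹t₂)(t₃⁻¹t₄)⋯(t_{m-1}⁻¹t_m) · φ(t_m)`. Every bracket is unchanged when
both of its entries are multiplied on the left by `x`, so translating a vertex by `x` only replaces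
`φ(t_m)` by `φ(x t_m)`, a different colour for `x ≠ 1` since `φ` is injective. Changing a single
coordinate changes a single factor of `t₁⁻¹t₂⋯ψ(t_m)`, an injective function of that coordinate.
So `c` is a proper `|T|`-colouring, and the `|T|` constant vertices form a clique.
-/

theorem List.apply_eq_of_prod_ofFn_eq {G : Type*} [CancelMonoid G] {m : ℕ} {f g : Fin m → G}
    {i : Fin m} (hfg : ∀ j ≠ i, f j = g j) (hprod : (List.ofFn f).prod = (List.ofFn g).prod) :
    f i = g i := by
  induction m with
  | zero => exact i.elim0
  | succ m ih =>
    rw [List.ofFn_succ, List.ofFn_succ, List.prod_cons, List.prod_cons] at hprod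
    rcases Fin.eq_zero_or_eq_succ i with rfl | ⟨i, rfl⟩
    · have htail : (fun j : Fin m => f j.succ) = fun j => g j.succ :=
        funext fun j => hfg j.succ j.succ_ne_zero
      rw [htail] at hprod
      exact mul_right_cancel hprod
    · rw [hfg 0 i.succ_ne_zero.symm] at hprod
      exact ih (fun j hj => hfg j.succ ((Fin.succ_injective m).ne hj)) (mul_left_cancel hprod)

section Colouring

variable {T : Type*} [Group T]

def altProd {n : ℕ} (t : Fin n → T) : T :=
  (List.ofFn fun i : Fin n => if (i : ℕ) % 2 = 0 then (t i)⁻¹ else t i).prod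

theorem altProd_succ_succ {n : ℕ} (t : Fin (n + 2) → T) :
    altProd t = (t 0)⁻¹ * t 1 * altProd fun i => t i.succ.succ := by
  have hmod (j : ℕ) : (j + 1 + 1) % 2 = j % 2 := by omega
  simp [altProd, List.ofFn_succ, hmod, mul_assoc]

theorem altProd_mul_left (x : T) {n : ℕ} (hn : Even n) (t : Fin n → T) :
    altProd (fun i => x * t i) = altProd t := by
  induction n using Nat.twoStepInduction with
  | zero => rfl
  | one => exact absurd hn Nat.not_even_one
  | more n ih _ =>
    rw [altProd_succ_succ, altProd_succ_succ, ih ((Nat.even_add.mp hn).mpr even_two)]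
    group

theorem hpColouring_eq_altProd_mul (φ : T → T) {n : ℕ} (hn : Odd n) (t : Fin (n + 1) → T) :
    hpColouring (n + 1) φ t = altProd t * φ (t (Fin.last n)) := by
  have hodd : n % 2 ≠ 0 := by simpa [Nat.odd_iff] using hn
  rw [hpColouring, altProd, List.ofFn_succ', List.ofFn_succ', List.prod_concat, List.prod_concat]
  have hlt (i : Fin n) : (i : ℕ) ≠ n := i.isLt.ne
  simp [hodd, hlt, mul_assoc]

theorem hpColouring_mul_left_ne {φ : T → T} (hφ : Function.Injective φ) {n : ℕ} (hn : Odd n)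
    {x : T} (hx : x ≠ 1) (t : Fin (n + 1) → T) :
    hpColouring (n + 1) φ (fun i => x * t i) ≠ hpColouring (n + 1) φ t := by
  rw [hpColouring_eq_altProd_mul φ hn, hpColouring_eq_altProd_mul φ hn,
    altProd_mul_left x hn.add_one]
  intro h
  exact hx (mul_eq_right.mp (hφ (mul_left_cancel h)))

theorem hpColouring_ne_of_eq_off {φ : T → T} (hψ : Function.Injective fun x => x * φ x)
    {m : ℕ} {a b : Fin m → T} {i : Fin m} (hab : ∀ j ≠ i, a j = b j) (hi : a i ≠ b i) :
    hpColouring m φ a ≠ hpColouring m φ b := by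
  intro h
  have hfactor := List.apply_eq_of_prod_ofFn_eq (i := i) (fun j hj => by rw [hab j hj]) h
  refine hi ?_
  split_ifs at hfactor
  · exact hψ hfactor
  · exact inv_injective hfactor
  · exact hfactor

theorem hpColouring_ne_of_adj {φ : T → T} (hφ : Function.Injective φ)
    (hψ : Function.Injective fun x => x * φ x) {n : ℕ} (hn : Odd n) {a b : Fin (n + 1) → T}
    (hadj : (diagGraph T (n + 1)).Adj a b) :
    hpColouring (n + 1) φ a ≠ hpColouring (n + 1) φ b := by
  obtain ⟨-, ⟨i, hi, hunique⟩ | ⟨x, hx, hb⟩⟩ := hadj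
  · exact hpColouring_ne_of_eq_off hψ (fun j hj => not_not.mp (mt (hunique j) hj)) hi
  · obtain rfl : b = fun i => x * a i := funext hb
    exact (hpColouring_mul_left_ne hφ hn hx a).symm

end Colouring

def diagGraph.constHom (T : Type*) [Group T] {m : ℕ} (hm : m ≠ 0) :
    (⊤ : SimpleGraph T) →g diagGraph T m where
  toFun := Function.const _
  map_rel' {x y} hxy :=
    have : Nonempty (Fin m) := ⟨⟨0, Nat.pos_of_ne_zero hm⟩⟩
    ⟨Function.const_injective.ne hxy, Or.inr ⟨y * x⁻¹, mul_inv_eq_one.not.mpr hxy.symm,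
      fun _ => (inv_mul_cancel_right y x).symm⟩⟩

theorem card_le_chromaticNumber_diagGraph (T : Type*) [Group T] [Fintype T] {m : ℕ}
    (hm : m ≠ 0) : (Fintype.card T : ℕ∞) ≤ (diagGraph T m).chromaticNumber :=
  SimpleGraph.chromaticNumber_top (V := T) ▸
    SimpleGraph.chromaticNumber_mono_of_hom (diagGraph.constHom T hm)

/-- If the finite group `T` has a complete mapping `φ` (so that
`ψ : x ↦ xφ(x)` is also a bijection) and `m ≥ 2` is even, then `hpColouring`
is a proper colouring of `Γ_D(T,m)`, and the chromatic number of `Γ_D(T,m)`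
equals `|T|`. -/
theorem diagGraph_proper_colouring_even {T : Type*} [Group T] [Fintype T]
    {m : ℕ} (φ : T → T) (hφ : Function.Bijective φ)
    (hψ : Function.Bijective fun x : T => x * φ x)
    (hm : Even m) (hm2 : 2 ≤ m) :
    (∀ a b : Fin m → T, (diagGraph T m).Adj a b →
      hpColouring m φ a ≠ hpColouring m φ b) ∧
    (diagGraph T m).chromaticNumber = (Fintype.card T : ℕ∞) := by
  obtain ⟨n, hn, rfl⟩ : ∃ n, Odd n ∧ m = n + 1 :=
    ⟨m - 1, Nat.Even.sub_odd (by omega) hm odd_one, by omega⟩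
  have proper (a b : Fin (n + 1) → T) (hadj : (diagGraph T (n + 1)).Adj a b) :=
    hpColouring_ne_of_adj hφ.injective hψ.injective hn hadj
  refine ⟨proper, le_antisymm ?_ (card_le_chromaticNumber_diagGraph T n.succ_ne_zero)⟩
  exact (SimpleGraph.Coloring.mk _ (proper _ _)).colorable.chromaticNumber_le
end

section
/- For any finite group T and integer m ≥ 3, the map from T^m to T^{m−2} sending [t₁,t₂,…,t_m] to [t₁t₂⁻¹t₃, t₄, …, t_m] is a graph homomorphism from the diagonal graph Γ_D(T,m) to Γ_D(T,m−2): it maps adjacent vertices to adjacent vertices. Consequently χ(Γ_D(T,m)) ≤ χ(Γ_D(T,m−2)). -/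
/-- The map `[t₁,t₂,…,t_m] ↦ [t₁t₂⁻¹t₃, t₄, …, t_m]` from `T^m` to `T^{m−2}`. -/
def diagContract (T : Type*) [Group T] (m : ℕ) (hm : 3 ≤ m)
    (t : Fin m → T) : Fin (m - 2) → T := fun j =>
  if (j : ℕ) = 0 then
    t ⟨0, by omega⟩ * (t ⟨1, by omega⟩)⁻¹ * t ⟨2, by omega⟩
  else t ⟨(j : ℕ) + 2, by have := j.isLt; omega⟩

/-! `diagContract` commutes with left multiplication by any `x : T`, since
`(x t₁)(x t₂)⁻¹(x t₃) = x t₁ t₂⁻¹ t₃`, so diagonal edges go to diagonal edges. Changing only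
coordinate `i` of `t` changes `diagContract t` only in coordinate `i - 2` (truncated, so the three
merged coordinates go to `0`), and does change it there because `t₁ t₂⁻¹ t₃` is injective in each
argument; so coordinate edges go to coordinate edges. -/

section DiagContract

variable {T : Type*} [Group T] {m : ℕ} (hm : 3 ≤ m)

def diagContractIndex (i : Fin m) : Fin (m - 2) := ⟨i - 2, by omega⟩

theorem diagContract_mul_left (x : T) (t : Fin m → T) :
    diagContract T m hm (fun i => x * t i) = fun j => x * diagContract T m hm t j := by
  funext j
  unfold diagContract
  split_ifs
  · group
  · rfl

variable {hm} {a b : Fin m → T} {i : Fin m}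

theorem diagContract_apply_eq_of_ne_index (hab : ∀ j ≠ i, a j = b j) {k : Fin (m - 2)}
    (hk : k ≠ diagContractIndex hm i) : diagContract T m hm a k = diagContract T m hm b k := by
  have hk' : (k : ℕ) ≠ i - 2 := fun h => hk (Fin.ext h)
  have hab' : ∀ (n : ℕ) (hn : n < m), n ≠ i → a ⟨n, hn⟩ = b ⟨n, hn⟩ :=
    fun n hn h => hab ⟨n, hn⟩ (fun h' => h (congrArg Fin.val h'))
  unfold diagContract
  split_ifs with hk0
  · rw [hab' 0 _ (by omega), hab' 1 _ (by omega), hab' 2 _ (by omega)]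
  · exact hab' _ _ (by omega)

theorem diagContract_apply_index_ne (hab : ∀ j ≠ i, a j = b j) (hi : a i ≠ b i) :
    diagContract T m hm a (diagContractIndex hm i) ≠
      diagContract T m hm b (diagContractIndex hm i) := by
  obtain ⟨i, hil⟩ := i
  have hab' : ∀ (n : ℕ) (hn : n < m), n ≠ i → a ⟨n, hn⟩ = b ⟨n, hn⟩ :=
    fun n hn h => hab ⟨n, hn⟩ (fun h' => h (congrArg Fin.val h'))
  by_cases hi3 : i < 3
  · simp only [diagContract, diagContractIndex, show i - 2 = 0 by omega, if_true]
    intro hc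
    apply hi
    obtain rfl | rfl | rfl : i = 0 ∨ i = 1 ∨ i = 2 := by omega
    · rw [hab' 1 _ (by omega), hab' 2 _ (by omega)] at hc
      exact mul_right_cancel (mul_right_cancel hc)
    · rw [hab' 0 _ (by omega), hab' 2 _ (by omega)] at hc
      exact inv_injective (mul_left_cancel (mul_right_cancel hc))
    · rw [hab' 0 _ (by omega), hab' 1 _ (by omega)] at hc
      exact mul_left_cancel hc
  · simpa only [diagContract, diagContractIndex, show i - 2 ≠ 0 by omega, if_false,
      show i - 2 + 2 = i by omega] using hi

end DiagContract

theorem diagGraph_adj_diagContract {T : Type*} [Group T] {m : ℕ} (hm : 3 ≤ m)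
    {a b : Fin m → T} (h : (diagGraph T m).Adj a b) :
    (diagGraph T (m - 2)).Adj (diagContract T m hm a) (diagContract T m hm b) := by
  obtain ⟨-, ⟨i, hi, hu⟩ | ⟨x, hx, hb⟩⟩ := h
  · have hab : ∀ j ≠ i, a j = b j := fun j hj => not_not.mp (mt (hu j) hj)
    have hne := diagContract_apply_index_ne (hm := hm) hab hi
    refine ⟨fun hc => hne (congrFun hc _), Or.inl ⟨_, hne, fun k hk => ?_⟩⟩
    exact not_not.mp (mt (diagContract_apply_eq_of_ne_index hab) hk)
  · obtain rfl : b = fun j => x * a j := funext hb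
    rw [diagContract_mul_left]
    refine ⟨fun hc => hx ?_, Or.inr ⟨x, hx, fun _ => rfl⟩⟩
    exact mul_eq_right.mp (congrFun hc ⟨0, by omega⟩).symm

def diagContractHom (T : Type*) [Group T] {m : ℕ} (hm : 3 ≤ m) :
    diagGraph T m →g diagGraph T (m - 2) :=
  ⟨diagContract T m hm, diagGraph_adj_diagContract hm⟩

theorem diagGraph_hom_and_chromatic_general {T : Type*} [Group T]
    {m : ℕ} (hm : 3 ≤ m) :
    (∀ a b : Fin m → T, (diagGraph T m).Adj a b →
      (diagGraph T (m - 2)).Adj (diagContract T m hm a) (diagContract T m hm b)) ∧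
    (diagGraph T m).chromaticNumber ≤ (diagGraph T (m - 2)).chromaticNumber :=
  ⟨fun _ _ => diagGraph_adj_diagContract hm,
    SimpleGraph.chromaticNumber_mono_of_hom (diagContractHom T hm)⟩

/-- For any finite group `T` and `m ≥ 3`, the map
`[t₁,t₂,…,t_m] ↦ [t₁t₂⁻¹t₃, t₄, …, t_m]` is a graph homomorphism from
`Γ_D(T,m)` to `Γ_D(T,m−2)`; consequently
`χ(Γ_D(T,m)) ≤ χ(Γ_D(T,m−2))`. -/
theorem diagGraph_hom_and_chromatic {T : Type*} [Group T] [Fintype T]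
    {m : ℕ} (hm : 3 ≤ m) :
    (∀ a b : Fin m → T, (diagGraph T m).Adj a b →
      (diagGraph T (m - 2)).Adj (diagContract T m hm a) (diagContract T m hm b)) ∧
    (diagGraph T m).chromaticNumber ≤ (diagGraph T (m - 2)).chromaticNumber :=
  diagGraph_hom_and_chromatic_general hm
end
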